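/- Let u, v, u', v' ≥ 2 be integers with uv ≠ 4 and u'v' ≠ 4. If a sequence ⟦q₀,q₁,...,q_r⟧ ∈ A₂ satisfies the (u,v)-divisibility property (v | q_i for even i and u | q_i for odd i), then f_{u,v}(g_{u',v'}(⟦q₀,q₁,...,q_r⟧)) = ⟦q₀,q₁,...,q_r⟧. -/

import Mathlib

/-- Evaluation of a finite continued fraction `[q₀, q₁, …, q_r]`. -/
def E : List ℤ → ℚ
  | [] => 0
  | [q] => (q : ℚ)
  | q :: l => (q : ℚ) + 1 / E l

/-- Concatenation `⊕` of finite sequences, merging when the second begins with `0`. -/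
def oplus (a b : List ℤ) : List ℤ :=
  match b with
  | [] => a
  | p :: ps =>
    if p = 0 then
      match ps with
      | [] => a
      | p1 :: ps' => a.dropLast ++ (a.getLast! + p1) :: ps'
    else a ++ (p :: ps)

/-- No tail continued fraction `[q_i, …, q_r]` (for `0 < i < r`) evaluates to `0`. -/
def TailsNonzero (l : List ℤ) : Prop :=
  ∀ i, 0 < i → i + 1 < l.length → E (l.drop i) ≠ 0

/-- `[q₀, …, q_r]` is a short continued fraction: `q_i ≥ 1` for `0 < i < r`, `q_r > 1` if `r > 0`. -/
def IsShortCF (l : List ℤ) : Prop :=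
  l ≠ [] ∧ (∀ i, 0 < i → i + 1 < l.length → 1 ≤ l.getD i 0) ∧
    (1 < l.length → 1 < l.getD (l.length - 1) 0)

/-- Membership in `A₁`. -/
def memA1 (l : List ℤ) : Prop := IsShortCF l ∧ TailsNonzero l

/-- Membership in `A₂`: all entries after the first have absolute value `> 1`. -/
def memA2 (l : List ℤ) : Prop :=
  l ≠ [] ∧ (∀ i, 0 < i → i < l.length → 1 < |l.getD i 0|) ∧ TailsNonzero l

/-- The `(u,v)`-divisibility property: `v` divides even-indexed entries, `u` odd-indexed ones. -/
def DivProp (u v : ℤ) (l : List ℤ) : Prop :=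
  ∀ i, i < l.length → (if i % 2 = 0 then v else u) ∣ l.getD i 0

/-- The function `f_{u,v} : A₁ → A₂`. -/
def fCF (u v : ℤ) : List ℤ → List ℤ
  | [] => []
  | [q0] => [q0]
  | q0 :: q1 :: rest =>
    if ¬ (v ∣ q0) ∧ q1 = 1 then
      match rest with
      | [] => [q0 + 1]
      | q2 :: rest' => oplus [q0 + 1] ((fCF v u ((q2 + 1) :: rest')).map (fun x => -x))
    else if ¬ (v ∣ q0) ∧ q1 = 2 then
      match rest with
      | [] => [q0 + 1, -2]
      | q2 :: rest' => oplus [q0 + 1] (fCF v u (-2 :: (q2 + 1) :: rest'))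
    else oplus [q0] (fCF v u (q1 :: rest))
termination_by l => l.length
decreasing_by all_goals (simp_all [List.length]; try omega)

/-- The function `g_{u,v} : A₂ → A₁`. -/
def gCF (u v : ℤ) : List ℤ → List ℤ
  | [] => []
  | [q0] => [q0]
  | q0 :: q1 :: rest =>
    if (q1 < 0 ∧ u ≠ 2) ∨ (q1 < -2 ∧ u = 2) then
      oplus [q0 - 1, 1] ((gCF v u (((q1 + 1) :: rest).map (fun x => -x))))
    else if q1 = -2 ∧ u = 2 then
      match rest with
      | [] => [q0 - 1, 2]
      | q2 :: rest' => oplus [q0 - 1, 2] (gCF v u ((q2 - 1) :: rest'))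
    else oplus [q0] (gCF v u (q1 :: rest))
termination_by l => l.length
decreasing_by all_goals (simp_all [List.length]; try omega)

/-
Walk along `⟦q₀, q₁, …⟧` with `v ∣ q₀`. If `q₁ ≥ 2`, `g` copies `q₀`, and `f`, seeing an
entry divisible by `v`, copies it back. If `q₁ ≤ -2`, `g` writes `q₀ - 1` followed by a `1` (or a
`2` when `q₁ = -2`, `u' = 2`); since `v ∤ q₀ - 1`, `f` applies the matching identity and undoes it.
Either way the remaining entries are handled by induction on the length. The one
delicate case is `q₁ = -2`, `u' ≠ 2`: the recursive call of `g` can start with `0`, which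
`⊕` merges into a `2`-pattern. Here `u ∣ -2` forces `u = 2`, so `v ≥ 3` as `uv ≠ 4`; then
`|q₂| ≥ 3`, and the merged output is exactly what the `2`-rule of `f` inverts.
-/

lemma oplus_cons_of_ne_zero (a : List ℤ) {p : ℤ} (hp : p ≠ 0) (ps : List ℤ) :
    oplus a (p :: ps) = a ++ p :: ps := by
  simp [oplus, hp]

lemma oplus_pair (a c : ℤ) (b : List ℤ) : oplus [a, c] b = a :: oplus [c] b := by
  rcases b with _ | ⟨p, _ | ⟨p1, ps⟩⟩ <;> simp [oplus] <;> split_ifs <;> simp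

lemma oplus_pair_zero_cons (a c p : ℤ) (ps : List ℤ) :
    oplus [a, c] (0 :: p :: ps) = a :: (c + p) :: ps := by
  simp [oplus]

lemma divProp_cons {u v a : ℤ} {t : List ℤ} : DivProp u v (a :: t) ↔ v ∣ a ∧ DivProp v u t := by
  constructor
  · intro h
    refine ⟨by simpa using h 0 (by simp), fun i hi => ?_⟩
    have := h (i + 1) (by simpa using hi)
    rcases Nat.mod_two_eq_zero_or_one i with hi2 | hi2 <;> simp_all [Nat.succ_mod_two_eq_zero_iff]
  · rintro ⟨ha, ht⟩ (_ | i) hi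
    · simpa using ha
    · have := ht i (by simpa using hi)
      rcases Nat.mod_two_eq_zero_or_one i with hi2 | hi2 <;> simp_all [Nat.succ_mod_two_eq_zero_iff]

lemma divProp_map_neg {u v : ℤ} {t : List ℤ} : DivProp u v (t.map (-·)) ↔ DivProp u v t := by
  simp only [DivProp, List.length_map]
  refine forall₂_congr fun i hi => ?_
  rw [List.getD_eq_getElem _ _ (by simpa using hi), List.getD_eq_getElem _ _ hi]
  simp

section gCF

variable (a b q0 : ℤ) (rest : List ℤ)

lemma gCF_of_neg {q1 : ℤ} (hq1 : q1 ≤ -2) (hB : ¬(q1 = -2 ∧ a = 2)) :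
    gCF a b (q0 :: q1 :: rest)
      = oplus [q0 - 1, 1] (gCF b a ((-q1 - 1) :: rest.map (-·))) := by
  rw [gCF.eq_def]
  dsimp only
  rw [if_pos (by omega)]
  simp only [List.map_cons, neg_add]
  ring_nf

lemma gCF_neg_two_nil : gCF 2 b [q0, -2] = [q0 - 1, 2] := by
  rw [gCF.eq_def]; simp

lemma gCF_neg_two_cons (q2 : ℤ) :
    gCF 2 b (q0 :: -2 :: q2 :: rest) = oplus [q0 - 1, 2] (gCF b 2 ((q2 - 1) :: rest)) := by
  rw [gCF.eq_def]; simp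

lemma gCF_of_nonneg {q1 : ℤ} (hq1 : 0 ≤ q1) :
    gCF a b (q0 :: q1 :: rest) = oplus [q0] (gCF b a (q1 :: rest)) := by
  rw [gCF.eq_def]
  dsimp only
  rw [if_neg (by omega), if_neg (by omega)]

end gCF

lemma exists_gCF_cons_eq (a b : ℤ) {t : List ℤ} (ht : ∀ x ∈ t, 1 < |x|) :
    ∃ d s, (d = 0 ∨ d = 1) ∧ ∀ q, gCF a b (q :: t) = (q - d) :: s := by
  induction t generalizing a b with
  | nil => exact ⟨0, [], by simp [gCF]⟩
  | cons q1 rest ih =>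
    have hq1 : q1 ≤ -2 ∨ 2 ≤ q1 := by have := ht q1 (by simp); rw [lt_abs] at this; omega
    rcases hq1 with hq1 | hq1
    · by_cases hB : q1 = -2 ∧ a = 2
      · obtain ⟨rfl, rfl⟩ := hB
        cases rest with
        | nil => exact ⟨1, [2], by simp [gCF_neg_two_nil]⟩
        | cons q2 rest' =>
          exact ⟨1, oplus [2] (gCF b 2 ((q2 - 1) :: rest')),
            by simp [gCF_neg_two_cons, oplus_pair]⟩
      · exact ⟨1, oplus [1] (gCF b a ((-q1 - 1) :: rest.map (-·))),
          by simp [gCF_of_neg _ _ _ _ hq1 hB, oplus_pair]⟩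
    · obtain ⟨d, s, hd, hs⟩ := ih b a fun x hx => ht x (by simp [hx])
      refine ⟨0, (q1 - d) :: s, by simp, fun q => ?_⟩
      rw [gCF_of_nonneg _ _ _ _ (by omega), hs, oplus_cons_of_ne_zero _ (by omega)]
      simp

lemma gCF_cons_succ {a b q p : ℤ} {t s : List ℤ} (ht : ∀ x ∈ t, 1 < |x|)
    (h : gCF a b (q :: t) = p :: s) : gCF a b ((q + 1) :: t) = (p + 1) :: s := by
  obtain ⟨d, s', -, hs⟩ := exists_gCF_cons_eq a b ht
  rw [hs] at h ⊢
  simp only [List.cons.injEq] at h ⊢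
  exact ⟨by omega, h.2⟩

lemma forall_one_lt_abs_map_neg {t : List ℤ} (ht : ∀ x ∈ t, 1 < |x|) :
    ∀ x ∈ t.map (-·), 1 < |x| :=
  List.forall_mem_map.2 fun x hx => by simpa using ht x hx

lemma exists_gCF_cons_cons_of_two_le (a b q0 : ℤ) {q1 : ℤ} (hq1 : 2 ≤ q1) {rest : List ℤ}
    (hrest : ∀ x ∈ rest, 1 < |x|) : ∃ s, gCF a b (q0 :: q1 :: rest) = q0 :: s := by
  obtain ⟨d, s, hd, hs⟩ := exists_gCF_cons_eq b a hrest
  exact ⟨_, by rw [gCF_of_nonneg _ _ _ _ (by omega), hs, oplus_cons_of_ne_zero _ (by omega)]; rfl⟩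

section fCF

variable {u v a : ℤ}

lemma fCF_of_dvd (ha : v ∣ a) (q : ℤ) (t : List ℤ) :
    fCF u v (a :: q :: t) = oplus [a] (fCF v u (q :: t)) := by
  rw [fCF.eq_def]
  dsimp only
  rw [if_neg (by tauto), if_neg (by tauto)]

lemma fCF_one_cons (ha : ¬v ∣ a) (p : ℤ) (t : List ℤ) :
    fCF u v (a :: 1 :: p :: t) = oplus [a + 1] ((fCF v u ((p + 1) :: t)).map (-·)) := by
  rw [fCF.eq_def]; simp [ha]

lemma fCF_two_nil (ha : ¬v ∣ a) : fCF u v [a, 2] = [a + 1, -2] := by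
  rw [fCF.eq_def]; simp [ha]

lemma fCF_two_cons (ha : ¬v ∣ a) (p : ℤ) (t : List ℤ) :
    fCF u v (a :: 2 :: p :: t) = oplus [a + 1] (fCF v u (-2 :: (p + 1) :: t)) := by
  rw [fCF.eq_def]; simp [ha]

end fCF

lemma not_dvd_sub_one {v q : ℤ} (hv : 2 ≤ v) (hq : v ∣ q) : ¬v ∣ q - 1 := fun h =>
  absurd (Int.le_of_dvd one_pos (by simpa using dvd_sub hq h)) (by omega)

section inverse

variable {u v u' v' q0 : ℤ}

lemma fCF_gCF_of_two_le {q1 : ℤ} {rest : List ℤ} (hq0 : v ∣ q0) (hq1 : 2 ≤ q1)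
    (hrest : ∀ x ∈ rest, 1 < |x|) (ih : fCF v u (gCF v' u' (q1 :: rest)) = q1 :: rest) :
    fCF u v (gCF u' v' (q0 :: q1 :: rest)) = q0 :: q1 :: rest := by
  obtain ⟨d, s, hd, hs⟩ := exists_gCF_cons_eq v' u' hrest
  have hhead : q1 - d ≠ 0 := by omega
  rw [gCF_of_nonneg _ _ _ _ (by omega), hs, oplus_cons_of_ne_zero _ hhead, List.singleton_append,
    fCF_of_dvd hq0, ← hs, ih, oplus_cons_of_ne_zero _ (by omega), List.singleton_append]

lemma fCF_gCF_of_neg {q1 p : ℤ} {rest s : List ℤ} (hv : 2 ≤ v) (hq0 : v ∣ q0) (hq1 : q1 ≤ -2)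
    (hB : ¬(q1 = -2 ∧ u' = 2)) (hrest : ∀ x ∈ rest, 1 < |x|)
    (hX : gCF v' u' ((-q1 - 1) :: rest.map (-·)) = p :: s) (hp : p ≠ 0)
    (ih : fCF v u (gCF v' u' (-q1 :: rest.map (-·))) = -q1 :: rest.map (-·)) :
    fCF u v (gCF u' v' (q0 :: q1 :: rest)) = q0 :: q1 :: rest := by
  have hshift := gCF_cons_succ (forall_one_lt_abs_map_neg hrest) hX
  rw [sub_add_cancel] at hshift
  rw [gCF_of_neg _ _ _ _ hq1 hB, hX, oplus_pair, oplus_cons_of_ne_zero _ hp, List.singleton_append,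
    fCF_one_cons (not_dvd_sub_one hv hq0), ← hshift, ih, sub_add_cancel]
  simpa [Function.comp_def] using oplus_cons_of_ne_zero [q0] (show q1 ≠ 0 by omega) rest

lemma fCF_pred_two_cons {a b q2 p : ℤ} {rest s : List ℤ} (hv : 2 ≤ v) (hq0 : v ∣ q0)
    (hu : u ∣ 2) (hq2 : q2 ≠ 0) (hrest : ∀ x ∈ rest, 1 < |x|)
    (hY : gCF a b ((q2 - 1) :: rest) = p :: s) (ih : fCF u v (gCF a b (q2 :: rest)) = q2 :: rest) :
    fCF u v ((q0 - 1) :: 2 :: p :: s) = q0 :: -2 :: q2 :: rest := by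
  have hshift := gCF_cons_succ hrest hY
  rw [sub_add_cancel] at hshift
  rw [fCF_two_cons (not_dvd_sub_one hv hq0), fCF_of_dvd (dvd_neg.2 hu), ← hshift, ih,
    oplus_cons_of_ne_zero _ hq2, sub_add_cancel]
  simp [oplus_cons_of_ne_zero]

lemma fCF_gCF_neg_two_nil (hv : 2 ≤ v) (hq0 : v ∣ q0) :
    fCF u v (gCF u' v' [q0, -2]) = [q0, -2] := by
  by_cases hu' : u' = 2
  · subst hu'
    rw [gCF_neg_two_nil, fCF_two_nil (not_dvd_sub_one hv hq0), sub_add_cancel]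
  · rw [gCF_of_neg _ _ _ _ le_rfl (by tauto), List.map_nil, show - -2 - 1 = (1 : ℤ) by norm_num,
      show gCF v' u' [1] = [1] by rw [gCF.eq_def], oplus_cons_of_ne_zero _ one_ne_zero,
      List.cons_append, List.singleton_append, fCF_one_cons (not_dvd_sub_one hv hq0),
      show fCF v u [(1 : ℤ) + 1] = [2] by rw [fCF.eq_def]; norm_num, sub_add_cancel]
    simp [oplus]

lemma fCF_gCF_neg_two_cons_of_pos {q2 : ℤ} {rest : List ℤ} (hv : 2 ≤ v) (hq0 : v ∣ q0)
    (hu : u ∣ 2) (hu' : u' ≠ 2) (hq2 : 3 ≤ q2) (hrest : ∀ x ∈ rest, 1 < |x|)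
    (ih : fCF u v (gCF u' v' (q2 :: rest)) = q2 :: rest) :
    fCF u v (gCF u' v' (q0 :: -2 :: q2 :: rest)) = q0 :: -2 :: q2 :: rest := by
  obtain ⟨d, s, hd, hs⟩ := exists_gCF_cons_eq u' v' hrest
  have hY := hs (q2 - 1)
  have hhead : q2 - 1 - d ≠ 0 := by omega
  rw [gCF_of_neg _ _ _ _ le_rfl (by tauto), List.map_cons,
    show - -2 - 1 = (1 : ℤ) by norm_num, gCF_of_neg _ _ _ _ (by omega) (by omega),
    List.map_map, neg_neg, sub_self]
  simp only [Function.comp_def, neg_neg, List.map_id']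
  rw [hY, oplus_cons_of_ne_zero _ hhead, List.cons_append, List.singleton_append,
    oplus_pair_zero_cons, show (1 : ℤ) + 1 = 2 by norm_num]
  exact fCF_pred_two_cons hv hq0 hu (by omega) hrest hY ih

lemma fCF_gCF_neg_two_cons_of_eq_two {q2 : ℤ} {rest : List ℤ} (hv : 2 ≤ v) (hq0 : v ∣ q0)
    (hu : u ∣ 2) (hq2 : 3 ≤ |q2|) (hrest : ∀ x ∈ rest, 1 < |x|)
    (ih : fCF u v (gCF v' 2 (q2 :: rest)) = q2 :: rest) :
    fCF u v (gCF 2 v' (q0 :: -2 :: q2 :: rest)) = q0 :: -2 :: q2 :: rest := by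
  obtain ⟨d, s, hd, hs⟩ := exists_gCF_cons_eq v' 2 hrest
  have hY := hs (q2 - 1)
  have hhead : q2 - 1 - d ≠ 0 := by rw [le_abs'] at hq2; omega
  rw [gCF_neg_two_cons, hY, oplus_pair, oplus_cons_of_ne_zero _ hhead, List.singleton_append]
  exact fCF_pred_two_cons hv hq0 hu (by rw [le_abs'] at hq2; omega) hrest hY ih

end inverse

theorem fCF_gCF_cons {u v : ℤ} (hu : 2 ≤ u) (hv : 2 ≤ v) (huv : u * v ≠ 4) (u' v' q0 : ℤ) :
    ∀ {t : List ℤ}, (∀ x ∈ t, 1 < |x|) → DivProp u v (q0 :: t) →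
      fCF u v (gCF u' v' (q0 :: t)) = q0 :: t
  | [], _, _ => by rw [gCF.eq_def, fCF.eq_def]
  | q1 :: rest, ht, hdiv => by
    obtain ⟨hq0, hq1, hdiv'⟩ : v ∣ q0 ∧ u ∣ q1 ∧ DivProp u v rest := by
      simpa only [divProp_cons] using hdiv
    have hrest : ∀ x ∈ rest, 1 < |x| := fun x hx => ht x (by simp [hx])
    have hvu : v * u ≠ 4 := by rwa [mul_comm]
    rcases le_abs'.1 (show 2 ≤ |q1| from ht q1 (by simp)) with hneg | hpos
    · have hrest' := forall_one_lt_abs_map_neg hrest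
      have hdiv_neg : DivProp v u (-q1 :: rest.map (-·)) :=
        divProp_cons.2 ⟨dvd_neg.2 hq1, divProp_map_neg.2 hdiv'⟩
      rcases hneg.lt_or_eq with hlt | rfl
      · obtain ⟨d, s, hd, hs⟩ := exists_gCF_cons_eq v' u' hrest'
        exact fCF_gCF_of_neg hv hq0 hneg (by omega) hrest (hs _) (by omega)
          (fCF_gCF_cons hv hu hvu v' u' _ hrest' hdiv_neg)
      have hu2 : u = 2 := le_antisymm (Int.le_of_dvd two_pos (dvd_neg.1 hq1)) hu
      subst hu2
      cases rest with
      | nil => exact fCF_gCF_neg_two_nil hv hq0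
      | cons q2 rest' =>
        have hq2 : 3 ≤ |q2| := by
          have := hrest q2 (by simp)
          have := Int.le_of_dvd (by omega) ((dvd_abs _ _).2 (divProp_cons.1 hdiv').1)
          omega
        have hrest'' : ∀ x ∈ rest', 1 < |x| := fun x hx => hrest x (by simp [hx])
        by_cases hu' : u' = 2
        · subst hu'
          exact fCF_gCF_neg_two_cons_of_eq_two hv hq0 dvd_rfl hq2 hrest''
            (fCF_gCF_cons hu hv huv v' 2 q2 hrest'' hdiv')
        rcases le_abs'.1 hq2 with hq2 | hq2
        · obtain ⟨s, hs⟩ := exists_gCF_cons_cons_of_two_le v' u' 1 (by omega : 2 ≤ -q2)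
            (forall_one_lt_abs_map_neg hrest'')
          exact fCF_gCF_of_neg hv hq0 le_rfl (by tauto) hrest (s := s) (by norm_num [hs])
            one_ne_zero (fCF_gCF_cons hv hu hvu v' u' _ hrest' hdiv_neg)
        · exact fCF_gCF_neg_two_cons_of_pos hv hq0 dvd_rfl hu' hq2 hrest''
            (fCF_gCF_cons hu hv huv u' v' q2 hrest'' hdiv')
    · exact fCF_gCF_of_two_le hq0 hpos hrest
        (fCF_gCF_cons hv hu hvu v' u' q1 hrest (divProp_cons.2 ⟨hq1, hdiv'⟩))
termination_by t => t.length

theorem fCF_gCF_general (u v u' v' : ℤ) (hu : 2 ≤ u) (hv : 2 ≤ v) (huv : u * v ≠ 4)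
    (l : List ℤ) (hl : memA2 l) (hdiv : DivProp u v l) :
    fCF u v (gCF u' v' l) = l := by
  obtain ⟨hne, habs, -⟩ := hl
  obtain ⟨q0, t, rfl⟩ := List.exists_cons_of_ne_nil hne
  refine fCF_gCF_cons hu hv huv u' v' q0 (fun x hx => ?_) hdiv
  obtain ⟨i, hi, rfl⟩ := List.getElem_of_mem hx
  simpa [hi] using habs (i + 1) i.succ_pos (by simpa using hi)

/-- If `⟦q₀,…,q_r⟧ ∈ A₂` satisfies the `(u,v)`-divisibility property, then
`f_{u,v}(g_{u',v'}(⟦q₀,…,q_r⟧)) = ⟦q₀,…,q_r⟧` for any `u', v' ≥ 2` with `u'v' ≠ 4`. -/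
theorem fCF_gCF (u v u' v' : ℤ) (hu : 2 ≤ u) (hv : 2 ≤ v) (huv : u * v ≠ 4)
    (hu' : 2 ≤ u') (hv' : 2 ≤ v') (hu'v' : u' * v' ≠ 4)
    (l : List ℤ) (hl : memA2 l) (hdiv : DivProp u v l) :
    fCF u v (gCF u' v' l) = l :=
  fCF_gCF_general u v u' v' hu hv huv l hl hdiv
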